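/- Let G be a finite connected simple graph and let A_x, A_y be spanning trees of G with |A_x \ A_y| = 1; let e_x be the unique edge of A_x \ A_y and e_y the unique edge of A_y \ A_x. Let i be an edge of G with i ∉ A_x and i ∉ A_y, let C_x be the unique cycle contained in A_x ∪ {i}, let C_y be the unique cycle contained in A_y ∪ {i}, and let C_e be the unique cycle contained in A_x ∪ {e_y}. Then either C_x = C_y, or all of the following hold: e_x ∈ C_x \ C_y, e_y ∈ C_y \ C_x, i ∈ C_x ∩ C_y, and (C_x \ C_y) ∪ (C_y \ C_x) = C_e; in the latter case the disjoint sets E_x = C_x \ (C_x ∩ C_y) and E_y = C_y \ (C_x ∩ C_y) partition C_e, and in particular e_x ∈ C_e. -/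

import Mathlib

/-!
A finite nonempty edge set in which every vertex has even degree contains a cycle: a longest
trail in it cannot have distinct ends, since the odd degree of an end along the trail leaves an
unused edge to extend it by. So in a forest every even edge set is empty, and a tree plus one
edge `j` carries exactly one nonempty even edge set, its fundamental cycle, which contains `j`.

If `e_x ∉ C_x`, then `C_x` also lies in `A_y ∪ {i}`, hence `C_x = C_y`; symmetrically if
`e_y ∉ C_y`. Otherwise `C_x ∆ C_y` is even, contains `e_x`, avoids `i` (which lies in both
cycles) and lies in `A_x ∪ {e_y}`, hence it is `C_e`.
-/

open SimpleGraph

def IsSpanningTree {V : Type*} (G : SimpleGraph V) (A : Set (Sym2 V)) : Prop :=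
  A ⊆ G.edgeSet ∧ (SimpleGraph.fromEdgeSet A).Connected ∧ (SimpleGraph.fromEdgeSet A).IsAcyclic

def IsCycleSet {V : Type*} (H : SimpleGraph V) (C : Set (Sym2 V)) : Prop :=
  ∃ (v : V) (w : H.Walk v v), w.IsCycle ∧ C = {e | e ∈ w.edges}

open scoped symmDiff

theorem Set.ncard_symmDiff_add_two_mul_ncard_inter {α : Type*} {s t : Set α} (hs : s.Finite)
    (ht : t.Finite) : (s ∆ t).ncard + 2 * (s ∩ t).ncard = s.ncard + t.ncard := by
  have hst := Set.ncard_inter_add_ncard_sdiff_eq_ncard s t hs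
  have hts := Set.ncard_inter_add_ncard_sdiff_eq_ncard t s ht
  rw [Set.symmDiff_def, Set.ncard_union_eq disjoint_sdiff_sdiff hs.sdiff ht.sdiff]
  rw [Set.inter_comm] at hts
  omega

theorem List.Nodup.ncard_setOf_mem_and {α : Type*} {l : List α} (hl : l.Nodup) (p : α → Prop)
    [DecidablePred p] : {a | a ∈ l ∧ p a}.ncard = l.countP (p ·) := by
  classical
  rw [List.countP_eq_length_filter, ← List.toFinset_card_of_nodup (hl.filter _),
    ← Set.ncard_coe_finset]
  congr 1
  ext a
  simp

section

variable {V : Type*}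

/-- The finiteness clause matters: `Set.ncard` is `0` on infinite sets. -/
def IsEvenEdgeSet (S : Set (Sym2 V)) : Prop :=
  S.Finite ∧ ∀ v, Even {e | e ∈ S ∧ v ∈ e}.ncard

theorem IsEvenEdgeSet.symmDiff {S T : Set (Sym2 V)} (hS : IsEvenEdgeSet S)
    (hT : IsEvenEdgeSet T) : IsEvenEdgeSet (S ∆ T) := by
  refine ⟨hS.1.union hT.1 |>.subset symmDiff_le_sup, fun v => ?_⟩
  have hinc : {e | e ∈ S ∆ T ∧ v ∈ e} = {e | e ∈ S ∧ v ∈ e} ∆ {e | e ∈ T ∧ v ∈ e} := by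
    ext e
    simp only [Set.mem_ofPred_eq, Set.mem_symmDiff]
    tauto
  have hcard := Set.ncard_symmDiff_add_two_mul_ncard_inter (hS.1.sep (v ∈ ·)) (hT.1.sep (v ∈ ·))
  rw [← hinc] at hcard
  have hsum := (hS.2 v).add (hT.2 v)
  rw [← hcard] at hsum
  simpa [Nat.even_add] using hsum

namespace SimpleGraph

variable {G : SimpleGraph V}

theorem Walk.IsTrail.even_ncard_incident_iff [DecidableEq V] {u v : V} {p : G.Walk u v}
    (hp : p.IsTrail) (x : V) :
    Even {e | e ∈ p.edges ∧ x ∈ e}.ncard ↔ u ≠ v → x ≠ u ∧ x ≠ v := by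
  rw [hp.edges_nodup.ncard_setOf_mem_and]
  exact hp.even_countP_edges_iff x

theorem Walk.IsCycle.isEvenEdgeSet {v : V} {w : G.Walk v v} (hw : w.IsCycle) :
    IsEvenEdgeSet {e | e ∈ w.edges} := by
  classical
  exact ⟨w.edges.finite_toSet, fun x => (hw.isTrail.even_ncard_incident_iff x).2 (absurd rfl)⟩

/-- The start `u` has odd degree along the trail, so an edge of `G` at `u` is left over. -/
theorem Walk.IsTrail.exists_cons_isTrail (heven : IsEvenEdgeSet G.edgeSet) {u v : V}
    {p : G.Walk u v} (hp : p.IsTrail) (huv : u ≠ v) :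
    ∃ (x : V) (q : G.Walk x v), q.IsTrail ∧ q.length = p.length + 1 := by
  classical
  have hodd : ¬ Even {e | e ∈ p.edges ∧ u ∈ e}.ncard := by
    rw [hp.even_ncard_incident_iff]
    exact fun h => (h huv).1 rfl
  obtain ⟨e, ⟨heG, hue⟩, hep⟩ : ∃ e, e ∈ {e | e ∈ G.edgeSet ∧ u ∈ e} ∧
      e ∉ {e | e ∈ p.edges ∧ u ∈ e} := by
    by_contra! hsub
    refine hodd ?_
    convert heven.2 u using 2
    exact Set.Subset.antisymm (fun e he => ⟨p.edges_subset_edgeSet he.1, he.2⟩) hsub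
  obtain ⟨x, rfl⟩ : ∃ x, e = s(u, x) := ⟨_, (Sym2.other_spec hue).symm⟩
  have hxu : G.Adj x u := (G.mem_edgeSet.1 heG).symm
  refine ⟨x, .cons hxu p, (Walk.isTrail_cons hxu p).2 ⟨hp, fun h => hep ⟨?_, hue⟩⟩, rfl⟩
  rwa [Sym2.eq_swap]

/-- In a forest trails are paths, so a nonempty trail has distinct ends and can be extended
forever, which the finiteness of the edge set forbids. -/
theorem IsAcyclic.edgeSet_eq_empty_of_isEvenEdgeSet (hG : G.IsAcyclic)
    (heven : IsEvenEdgeSet G.edgeSet) : G.edgeSet = ∅ := by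
  by_contra hne
  obtain ⟨⟨a, b⟩, hab⟩ := Set.nonempty_iff_ne_empty.2 hne
  have htrails : ∀ n, ∃ (x : V) (q : G.Walk x b), q.IsTrail ∧ q.length = n + 1 := by
    intro n
    induction n with
    | zero => exact ⟨a, .cons hab .nil, (Walk.isTrail_cons hab .nil).2 ⟨.nil, by simp⟩, rfl⟩
    | succ n ih =>
      obtain ⟨x, q, hq, hlen⟩ := ih
      have hxb : x ≠ b := by
        rintro rfl
        have hnil := Walk.isPath_iff_nil.1 ((hG.isPath_iff_isTrail q).2 hq)
        simp [Walk.length_eq_zero_iff.2 hnil] at hlen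
      exact hlen ▸ hq.exists_cons_isTrail heven hxb
  have := heven.1.fintype
  obtain ⟨x, q, hq, hlen⟩ := htrails G.edgeFinset.card
  have := hq.length_le_card_edgeFinset
  omega

theorem IsAcyclic.eq_empty_of_isEvenEdgeSet (hG : G.IsAcyclic) {S : Set (Sym2 V)}
    (hS : S ⊆ G.edgeSet) (heven : IsEvenEdgeSet S) : S = ∅ := by
  have hSedge : (fromEdgeSet S).edgeSet = S := by
    rw [edgeSet_fromEdgeSet]
    exact sdiff_eq_left.2 (Set.disjoint_left.2 fun e he => G.not_isDiag_of_mem_edgeSet (hS he))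
  have hle : fromEdgeSet S ≤ G := fun x y hxy => hS (fromEdgeSet_adj S |>.1 hxy).1
  simpa [hSedge] using (hG.anti hle).edgeSet_eq_empty_of_isEvenEdgeSet (by rwa [hSedge])

theorem subset_of_subset_edgeSet_fromEdgeSet {C s : Set (Sym2 V)}
    (h : C ⊆ (fromEdgeSet s).edgeSet) : C ⊆ s := by
  rw [edgeSet_fromEdgeSet] at h
  exact h.trans Set.sdiff_subset

theorem subset_edgeSet_fromEdgeSet_of_subset {C t : Set (Sym2 V)} (hG : C ⊆ G.edgeSet)
    (ht : C ⊆ t) : C ⊆ (fromEdgeSet t).edgeSet := by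
  rw [edgeSet_fromEdgeSet]
  exact fun e he => ⟨ht he, G.not_isDiag_of_mem_edgeSet (hG he)⟩

theorem IsAcyclic.mem_of_isEvenEdgeSet_subset_union {A C : Set (Sym2 V)} {j : Sym2 V}
    (hA : (fromEdgeSet A).IsAcyclic) (hC : IsEvenEdgeSet C) (hne : C.Nonempty)
    (hCA : C ⊆ (fromEdgeSet (A ∪ {j})).edgeSet) : j ∈ C := by
  by_contra hj
  refine hne.ne_empty (hA.eq_empty_of_isEvenEdgeSet ?_ hC)
  refine subset_edgeSet_fromEdgeSet_of_subset hCA fun e he => ?_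
  have := subset_of_subset_edgeSet_fromEdgeSet hCA he
  grind

end SimpleGraph

namespace IsCycleSet

variable {H : SimpleGraph V} {C : Set (Sym2 V)}

theorem isEvenEdgeSet (hC : IsCycleSet H C) : IsEvenEdgeSet C := by
  obtain ⟨v, w, hw, rfl⟩ := hC
  exact hw.isEvenEdgeSet

theorem nonempty (hC : IsCycleSet H C) : C.Nonempty := by
  obtain ⟨v, w, hw, rfl⟩ := hC
  cases w with
  | nil => exact absurd hw Walk.not_isCycle_nil
  | cons h p => exact ⟨_, List.mem_cons_self⟩

theorem subset_edgeSet (hC : IsCycleSet H C) : C ⊆ H.edgeSet := by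
  obtain ⟨v, w, -, rfl⟩ := hC
  exact w.edges_subset_edgeSet

theorem mem_of_isAcyclic {A : Set (Sym2 V)} {j : Sym2 V} (hA : (fromEdgeSet A).IsAcyclic)
    (hC : IsCycleSet (fromEdgeSet (A ∪ {j})) C) : j ∈ C :=
  hA.mem_of_isEvenEdgeSet_subset_union hC.isEvenEdgeSet hC.nonempty hC.subset_edgeSet

/-- Both sets contain `j`, so their symmetric difference is an even edge set of the forest. -/
theorem eq_of_isEvenEdgeSet {A D : Set (Sym2 V)} {j : Sym2 V} (hA : (fromEdgeSet A).IsAcyclic)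
    (hC : IsCycleSet (fromEdgeSet (A ∪ {j})) C) (hD : IsEvenEdgeSet D) (hDne : D.Nonempty)
    (hDA : D ⊆ (fromEdgeSet (A ∪ {j})).edgeSet) : D = C := by
  have hjC := hC.mem_of_isAcyclic hA
  have hjD := hA.mem_of_isEvenEdgeSet_subset_union hD hDne hDA
  rw [← symmDiff_eq_bot]
  refine hA.eq_empty_of_isEvenEdgeSet ?_ (hD.symmDiff hC.isEvenEdgeSet)
  refine subset_edgeSet_fromEdgeSet_of_subset
    (symmDiff_le_sup.trans (Set.union_subset hDA hC.subset_edgeSet)) fun e he => ?_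
  have hD' := subset_of_subset_edgeSet_fromEdgeSet hDA
  have hC' := subset_of_subset_edgeSet_fromEdgeSet hC.subset_edgeSet
  rw [Set.mem_symmDiff] at he
  grind

theorem eq_of_notMem {A B C' : Set (Sym2 V)} {a j : Sym2 V} (hB : (fromEdgeSet B).IsAcyclic)
    (hAB : A ⊆ B ∪ {a}) (hC : IsCycleSet (fromEdgeSet (A ∪ {j})) C) (ha : a ∉ C)
    (hC' : IsCycleSet (fromEdgeSet (B ∪ {j})) C') : C = C' := by
  refine hC'.eq_of_isEvenEdgeSet hB hC.isEvenEdgeSet hC.nonempty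
    (subset_edgeSet_fromEdgeSet_of_subset hC.subset_edgeSet fun e he => ?_)
  have := subset_of_subset_edgeSet_fromEdgeSet hC.subset_edgeSet he
  grind

end IsCycleSet

end

theorem fundamental_cycles_partition_general {V : Type*}
    (G : SimpleGraph V)
    (Ax Ay : Set (Sym2 V)) (hAx : IsSpanningTree G Ax) (hAy : IsSpanningTree G Ay)
    (ex ey : Sym2 V) (hex : Ax \ Ay = {ex}) (hey : Ay \ Ax = {ey})
    (i : Sym2 V) (hix : i ∉ Ax) (hiy : i ∉ Ay)
    (Cx Cy Ce : Set (Sym2 V))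
    (hCx : IsCycleSet (SimpleGraph.fromEdgeSet (Ax ∪ {i})) Cx)
    (hCy : IsCycleSet (SimpleGraph.fromEdgeSet (Ay ∪ {i})) Cy)
    (hCe : IsCycleSet (SimpleGraph.fromEdgeSet (Ax ∪ {ey})) Ce) :
    Cx = Cy ∨
      (ex ∈ Cx \ Cy ∧ ey ∈ Cy \ Cx ∧ i ∈ Cx ∩ Cy ∧
        (Cx \ Cy) ∪ (Cy \ Cx) = Ce ∧
        Disjoint (Cx \ (Cx ∩ Cy)) (Cy \ (Cx ∩ Cy)) ∧
        (Cx \ (Cx ∩ Cy)) ∪ (Cy \ (Cx ∩ Cy)) = Ce ∧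
        ex ∈ Ce) := by
  have hxy : Ax ⊆ Ay ∪ {ex} := Set.sdiff_subset_iff.1 hex.subset
  have hyx : Ay ⊆ Ax ∪ {ey} := Set.sdiff_subset_iff.1 hey.subset
  have hexA : ex ∈ Ax \ Ay := hex.symm ▸ rfl
  have heyA : ey ∈ Ay \ Ax := hey.symm ▸ rfl
  have hCxA := subset_of_subset_edgeSet_fromEdgeSet hCx.subset_edgeSet
  have hCyA := subset_of_subset_edgeSet_fromEdgeSet hCy.subset_edgeSet
  by_cases hx : ex ∈ Cx; swap
  · exact .inl (hCx.eq_of_notMem hAy.2.2 hxy hx hCy)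
  by_cases hy : ey ∈ Cy; swap
  · exact .inl (hCy.eq_of_notMem hAx.2.2 hyx hy hCx).symm
  have hiCx := hCx.mem_of_isAcyclic hAx.2.2
  have hiCy := hCy.mem_of_isAcyclic hAy.2.2
  have hexCy : ex ∉ Cy := fun h => by have := hCyA h; grind
  have heyCx : ey ∉ Cx := fun h => by have := hCxA h; grind
  have hsymm_sub : Cx ∆ Cy ⊆ (fromEdgeSet (Ax ∪ {i}) ⊔ fromEdgeSet (Ay ∪ {i})).edgeSet := by
    rw [edgeSet_sup]
    exact symmDiff_le_sup.trans (Set.union_subset_union hCx.subset_edgeSet hCy.subset_edgeSet)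
  have hsymm : Cx ∆ Cy = Ce := by
    refine hCe.eq_of_isEvenEdgeSet hAx.2.2 (hCx.isEvenEdgeSet.symmDiff hCy.isEvenEdgeSet)
      ⟨ex, Or.inl ⟨hx, hexCy⟩⟩ (subset_edgeSet_fromEdgeSet_of_subset hsymm_sub fun e he => ?_)
    rw [Set.mem_symmDiff] at he
    grind
  rw [Set.sdiff_self_inter, Set.sdiff_inter_self_eq_sdiff]
  exact .inr ⟨⟨hx, hexCy⟩, ⟨hy, heyCx⟩, ⟨hiCx, hiCy⟩, hsymm, disjoint_sdiff_sdiff, hsymm,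
    hsymm ▸ Or.inl ⟨hx, hexCy⟩⟩

/-- Structure of the fundamental cycles `C_x`, `C_y` of two spanning trees at
edge distance 1 with respect to a common inserted edge `i`: either the two
cycles coincide, or `e_x ∈ C_x \ C_y`, `e_y ∈ C_y \ C_x`, `i ∈ C_x ∩ C_y`, and
the exclusive parts `E_x = C_x \ (C_x ∩ C_y)` and `E_y = C_y \ (C_x ∩ C_y)`
partition the cycle `C_e` of `A_x ∪ {e_y}`; in particular `e_x ∈ C_e`. -/
theorem fundamental_cycles_partition {V : Type*} [Fintype V]
    (G : SimpleGraph V) (hG : G.Connected)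
    (Ax Ay : Set (Sym2 V)) (hAx : IsSpanningTree G Ax) (hAy : IsSpanningTree G Ay)
    (ex ey : Sym2 V) (hex : Ax \ Ay = {ex}) (hey : Ay \ Ax = {ey})
    (i : Sym2 V) (hiG : i ∈ G.edgeSet) (hix : i ∉ Ax) (hiy : i ∉ Ay)
    (Cx Cy Ce : Set (Sym2 V))
    (hCx : IsCycleSet (SimpleGraph.fromEdgeSet (Ax ∪ {i})) Cx)
    (hCy : IsCycleSet (SimpleGraph.fromEdgeSet (Ay ∪ {i})) Cy)
    (hCe : IsCycleSet (SimpleGraph.fromEdgeSet (Ax ∪ {ey})) Ce) :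
    Cx = Cy ∨
      (ex ∈ Cx \ Cy ∧ ey ∈ Cy \ Cx ∧ i ∈ Cx ∩ Cy ∧
        (Cx \ Cy) ∪ (Cy \ Cx) = Ce ∧
        Disjoint (Cx \ (Cx ∩ Cy)) (Cy \ (Cx ∩ Cy)) ∧
        (Cx \ (Cx ∩ Cy)) ∪ (Cy \ (Cx ∩ Cy)) = Ce ∧
        ex ∈ Ce) :=
  fundamental_cycles_partition_general G Ax Ay hAx hAy ex ey hex hey i hix hiy Cx Cy Ce hCx hCy hCe
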